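/- Let X be an infinite-dimensional real Banach space, q ∈ [1,∞), and suppose X has property (m_q*). Suppose there is a sequence (P_n)_{n≥1} of continuous finite-rank linear projections on X such that P_n ∘ P_m = P_{min(m,n)} for all m,n, P_n ≠ P_{n+1} for all n, P_n x → x in norm for every x ∈ X, and ‖x* ∘ P_n − x*‖ → 0 for every x* ∈ X* (i.e., X has a shrinking finite-dimensional decomposition). Then for every ε ∈ (0,2), s_ε B_{X*} = (1 − (ε/2)^q)^{1/q} · B_{X*} = {x* ∈ X* : ‖x*‖ ≤ (1 − (ε/2)^q)^{1/q}}. -/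

import Mathlib

/-!
If `x*` lies in the derived set, separability of `X` (which follows from the decomposition) makes
the weak* topology on the dual ball metrizable, so `x*` is the weak* limit of points `y_k` of the
ball with `‖y_k - x*‖ > ε/2`; property (m_q*) applied to `y_k - x*` gives
`‖x*‖^q + (ε/2)^q ≤ 1`.

Conversely, norm-one functionals `g_n` vanishing on the range of `P_n` form a weak*-null sequence.
If `‖y‖^q + (ε/2)^q < 1`, pick `s > ε/2` with `‖y‖^q + s^q < 1`; by (m_q*) the points `y ± s g_n`
eventually lie in the unit ball, and they eventually lie in any weak* neighbourhood of `y`, which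
therefore meets the ball in a set of diameter at least `2s > ε`. The derived set is norm closed,
which takes care of the boundary sphere.
-/

open Filter Topology Metric

/-- The ε-Szlenk derivation of the closed dual unit ball of `X`. -/
def szlenkDeriv (X : Type*) [NormedAddCommGroup X] [NormedSpace ℝ X] (ε : ℝ) :
    Set (StrongDual ℝ X) :=
  {x : StrongDual ℝ X | ‖x‖ ≤ 1 ∧
    ∀ V : Set (StrongDual ℝ X),
      IsOpen ((StrongDual.toWeakDual '' V : Set (WeakDual ℝ X))) → x ∈ V →
        ε < Metric.diam (Metric.closedBall (0 : StrongDual ℝ X) 1 ∩ V)}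

/-- A sequence in the dual is weak*-null if it tends to `0` in the weak* topology. -/
def WeakStarNull {X : Type*} [NormedAddCommGroup X] [NormedSpace ℝ X]
    (u : ℕ → StrongDual ℝ X) : Prop :=
  Filter.Tendsto (fun n => StrongDual.toWeakDual (u n)) Filter.atTop
    (nhds (0 : WeakDual ℝ X))


/-- Kalton–Werner property (m_q*). -/
def PropmqStar (X : Type*) [NormedAddCommGroup X] [NormedSpace ℝ X] (q : ℝ) : Prop :=
  ∀ x : StrongDual ℝ X, ∀ u : ℕ → StrongDual ℝ X, WeakStarNull u →
    Filter.limsup (fun n => ‖x + u n‖) Filter.atTop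
      = (‖x‖ ^ q + (Filter.limsup (fun n => ‖u n‖) Filter.atTop) ^ q) ^ (1 / q)

open TopologicalSpace

lemma le_one_sub_rpow_rpow_one_div_iff {a b q : ℝ} (ha : 0 ≤ a) (hb : b ^ q ≤ 1) (hq : 0 < q) :
    a ≤ (1 - b ^ q) ^ (1 / q) ↔ a ^ q + b ^ q ≤ 1 := by
  rw [one_div, Real.le_rpow_inv_iff_of_pos ha (by linarith) hq, le_sub_iff_add_le]

lemma lt_one_sub_rpow_rpow_one_div_iff {a b q : ℝ} (ha : 0 ≤ a) (hb : b ^ q ≤ 1) (hq : 0 < q) :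
    a < (1 - b ^ q) ^ (1 / q) ↔ a ^ q + b ^ q < 1 := by
  rw [one_div, Real.lt_rpow_inv_iff_of_pos ha (by linarith) hq, lt_sub_iff_add_lt]

lemma Metric.exists_half_lt_dist_of_lt_diam {α : Type*} [PseudoMetricSpace α] {s : Set α} {ε : ℝ}
    (hε : 0 ≤ ε) (h : ε < diam s) (x : α) : ∃ p ∈ s, ε / 2 < dist p x := by
  by_contra! hs
  have hsub : s ⊆ closedBall x (ε / 2) := hs
  have := (diam_mono hsub isBounded_closedBall).trans (diam_closedBall (by positivity))
  linarith

lemma Submodule.exists_norm_eq_one_forall_eq_zero {𝕜 E : Type*} [RCLike 𝕜] [NormedAddCommGroup E]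
    [NormedSpace 𝕜 E] (S : Submodule 𝕜 E) [IsClosed (S : Set E)] (hS : S ≠ ⊤) :
    ∃ f : StrongDual 𝕜 E, ‖f‖ = 1 ∧ ∀ y ∈ S, f y = 0 := by
  obtain ⟨x, hx⟩ : ∃ x, x ∉ S := by simpa [Submodule.eq_top_iff'] using hS
  obtain ⟨φ, hφ⟩ := SeparatingDual.exists_ne_zero (R := 𝕜)
    (mt (Submodule.Quotient.mk_eq_zero S).1 hx)
  set f : StrongDual 𝕜 E := φ.comp S.mkQL
  have hf : f ≠ 0 := fun h => hφ (by simpa [f] using congr($h x))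
  refine ⟨(‖f‖⁻¹ : 𝕜) • f, norm_smul_inv_norm hf, fun y hy => ?_⟩
  simp [f, (Submodule.Quotient.mk_eq_zero S).2 hy]

section

variable {X : Type*} [NormedAddCommGroup X] [NormedSpace ℝ X]

lemma weakStarNull_iff (u : ℕ → StrongDual ℝ X) :
    WeakStarNull u ↔ ∀ x : X, Tendsto (fun n => u n x) atTop (𝓝 0) :=
  tendsto_iff_forall_eval_tendsto_topDualPairing

lemma WeakStarNull.const_smul {u : ℕ → StrongDual ℝ X} (hu : WeakStarNull u) (c : ℝ) :
    WeakStarNull (fun n => c • u n) := by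
  simpa [WeakStarNull] using Filter.Tendsto.const_smul hu c

lemma isOpen_of_isOpen_image_toWeakDual {V : Set (StrongDual ℝ X)}
    (hV : IsOpen (StrongDual.toWeakDual '' V : Set (WeakDual ℝ X))) : IsOpen V := by
  rw [← StrongDual.toWeakDual.injective.preimage_image V]
  exact hV.preimage NormedSpace.Dual.toWeakDual_continuous

lemma WeakStarNull.eventually_add_mem {u : ℕ → StrongDual ℝ X} (hu : WeakStarNull u)
    {V : Set (StrongDual ℝ X)} (hV : IsOpen (StrongDual.toWeakDual '' V : Set (WeakDual ℝ X)))
    {y : StrongDual ℝ X} (hy : y ∈ V) : ∀ᶠ n in atTop, y + u n ∈ V := by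
  have h : Tendsto (fun n => StrongDual.toWeakDual (y + u n)) atTop
      (𝓝 (StrongDual.toWeakDual y)) := by
    simpa using (tendsto_const_nhds (x := StrongDual.toWeakDual y)).add hu
  filter_upwards [h (hV.mem_nhds ⟨y, hy, rfl⟩)] with n ⟨w, hw, hwe⟩
  rwa [← StrongDual.toWeakDual.injective hwe]

lemma isClosed_szlenkDeriv (ε : ℝ) : IsClosed (szlenkDeriv X ε) := by
  refine (isClosed_le continuous_norm continuous_const).inter
    (isOpen_compl_iff.1 (isOpen_iff_forall_mem_open.2 ?_))
  intro x hx
  obtain ⟨V, hV, hxV, hdiam⟩ : ∃ V, IsOpen (StrongDual.toWeakDual '' V : Set (WeakDual ℝ X)) ∧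
      x ∈ V ∧ diam (closedBall 0 1 ∩ V) ≤ ε := by
    by_contra! h
    exact hx h
  exact ⟨V, fun y hy hy' => (hy' V hV hy).not_ge hdiam, isOpen_of_isOpen_image_toWeakDual hV, hxV⟩

lemma separableSpace_of_tendsto_of_finiteDimensional (P : ℕ → X →L[ℝ] X)
    (hrank : ∀ n, FiniteDimensional ℝ (LinearMap.range (P n : X →ₗ[ℝ] X)))
    (hconv : ∀ x : X, Tendsto (fun n => P n x) atTop (𝓝 x)) : SeparableSpace X := by
  have hdense : Dense (⋃ n, (LinearMap.range (P n : X →ₗ[ℝ] X) : Set X)) := fun x =>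
    mem_closure_of_tendsto (hconv x) (Eventually.of_forall fun n => Set.mem_iUnion.2 ⟨n, x, rfl⟩)
  refine hdense.isSeparable_iff.1 (isSeparable_iUnion.2 fun n => ?_)
  have := hrank n
  exact .of_subtype _

lemma exists_weakStarNull_norm_eq_one (hinf : ¬ FiniteDimensional ℝ X) (P : ℕ → X →L[ℝ] X)
    (hrank : ∀ n, FiniteDimensional ℝ (LinearMap.range (P n : X →ₗ[ℝ] X)))
    (hconv : ∀ x : X, Tendsto (fun n => P n x) atTop (𝓝 x)) :
    ∃ g : ℕ → StrongDual ℝ X, (∀ n, ‖g n‖ = 1) ∧ WeakStarNull g := by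
  have hne : ∀ n, LinearMap.range (P n : X →ₗ[ℝ] X) ≠ ⊤ := fun n h => hinf <| by
    have := hrank n
    rw [h] at this
    exact Module.Finite.equiv (LinearEquiv.ofTop ⊤ rfl)
  have hclosed : ∀ n, IsClosed (LinearMap.range (P n : X →ₗ[ℝ] X) : Set X) := fun n =>
    haveI := hrank n; Submodule.closed_of_finiteDimensional _
  choose g hg1 hg0 using fun n =>
    haveI := hclosed n
    (LinearMap.range (P n : X →ₗ[ℝ] X)).exists_norm_eq_one_forall_eq_zero (hne n)
  refine ⟨g, hg1, (weakStarNull_iff g).2 fun x => ?_⟩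
  have hbound : ∀ n, ‖g n x‖ ≤ ‖P n x - x‖ := fun n => calc
    ‖g n x‖ = ‖g n (P n x - x)‖ := by
      rw [map_sub, hg0 n (P n x) (LinearMap.mem_range_self _ x), zero_sub, norm_neg]
    _ ≤ ‖g n‖ * ‖P n x - x‖ := (g n).le_opNorm _
    _ = ‖P n x - x‖ := by rw [hg1, one_mul]
  exact squeeze_zero_norm hbound (by simpa using (tendsto_sub_nhds_zero_iff.2 (hconv x)).norm)

lemma exists_seq_weakStarNull_of_mem_szlenkDeriv [SeparableSpace X] {ε : ℝ} (hε : 0 ≤ ε)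
    {x : StrongDual ℝ X} (hx : x ∈ szlenkDeriv X ε) :
    ∃ y : ℕ → StrongDual ℝ X, (∀ k, ‖y k‖ ≤ 1) ∧ WeakStarNull (fun k => y k - x) ∧
      ∀ k, ε / 2 < ‖y k - x‖ := by
  set K : Set (WeakDual ℝ X) := WeakDual.toStrongDual ⁻¹' closedBall 0 1
  have := WeakDual.metrizable_of_isCompact ℝ X K (WeakDual.isCompact_closedBall 0 1)
  have hxK : StrongDual.toWeakDual x ∈ K := by simpa [K] using hx.1
  set S : Set K := {p | ε / 2 < ‖WeakDual.toStrongDual (p : WeakDual ℝ X) - x‖}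
  have hcl : (⟨_, hxK⟩ : K) ∈ closure S := by
    refine mem_closure_iff.2 fun O hO hxO => ?_
    obtain ⟨V, hV, rfl⟩ := isOpen_induced_iff.1 hO
    have hV' : IsOpen (StrongDual.toWeakDual '' (StrongDual.toWeakDual ⁻¹' V)) := by
      rwa [Set.image_preimage_eq _ StrongDual.toWeakDual.surjective]
    obtain ⟨p, ⟨hp1, hpV⟩, hp⟩ := exists_half_lt_dist_of_lt_diam hε (hx.2 _ hV' hxO) x
    exact ⟨⟨StrongDual.toWeakDual p, hp1⟩, hpV, by simpa [S, dist_eq_norm] using hp⟩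
  obtain ⟨p, hpS, hp⟩ := mem_closure_iff_seq_limit.1 hcl
  refine ⟨fun k => WeakDual.toStrongDual (p k : WeakDual ℝ X),
    fun k => mem_closedBall_zero_iff.1 (p k).2, ?_, hpS⟩
  simpa [WeakStarNull] using (continuous_subtype_val.tendsto _ |>.comp hp).sub_const
    (StrongDual.toWeakDual x)

lemma PropmqStar.rpow_add_rpow_le_one {q : ℝ} (hmq : PropmqStar X q) (hq : 0 < q)
    {x : StrongDual ℝ X} {u : ℕ → StrongDual ℝ X} (hu : WeakStarNull u)
    (hle : ∀ k, ‖x + u k‖ ≤ 1) {c : ℝ} (hc : 0 ≤ c) (hcu : ∀ k, c ≤ ‖u k‖) :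
    ‖x‖ ^ q + c ^ q ≤ 1 := by
  have hbdd : IsBoundedUnder (· ≤ ·) atTop (fun k => ‖u k‖) :=
    isBoundedUnder_of ⟨1 + ‖x‖, fun k => by
      have := norm_sub_le (x + u k) x
      rw [add_sub_cancel_left] at this
      linarith [hle k]⟩
  have hcL : c ≤ limsup (fun k => ‖u k‖) atTop :=
    le_limsup_of_frequently_le (Frequently.of_forall hcu) hbdd
  have hlimsup : limsup (fun k => ‖x + u k‖) atTop ≤ 1 :=
    limsup_le_of_le (isBoundedUnder_of ⟨0, fun k => norm_nonneg _⟩).isCoboundedUnder_le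
      (Eventually.of_forall hle)
  rw [hmq x u hu, one_div, Real.rpow_inv_le_iff_of_pos
    (add_nonneg (by positivity) (Real.rpow_nonneg (hc.trans hcL) _)) zero_le_one hq,
    Real.one_rpow] at hlimsup
  have := Real.rpow_le_rpow hc hcL hq.le
  linarith

lemma PropmqStar.rpow_add_rpow_le_one_of_mem_szlenkDeriv [SeparableSpace X] {q : ℝ}
    (hmq : PropmqStar X q) (hq : 0 < q) {ε : ℝ} (hε : 0 ≤ ε) {x : StrongDual ℝ X}
    (hx : x ∈ szlenkDeriv X ε) : ‖x‖ ^ q + (ε / 2) ^ q ≤ 1 := by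
  obtain ⟨y, hy1, hnull, hfar⟩ := exists_seq_weakStarNull_of_mem_szlenkDeriv hε hx
  exact hmq.rpow_add_rpow_le_one hq hnull (by simpa using hy1) (by positivity) fun k => (hfar k).le

lemma PropmqStar.eventually_norm_add_smul_lt_one {q : ℝ} (hmq : PropmqStar X q) (hq : 0 < q)
    {g : ℕ → StrongDual ℝ X} (hg1 : ∀ n, ‖g n‖ = 1) (hg : WeakStarNull g) {y : StrongDual ℝ X}
    {c : ℝ} (h : ‖y‖ ^ q + |c| ^ q < 1) : ∀ᶠ n in atTop, ‖y + c • g n‖ < 1 := by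
  have hnorm : ∀ n, ‖c • g n‖ = |c| := fun n => by rw [norm_smul, hg1, mul_one, Real.norm_eq_abs]
  have hlim : limsup (fun n => ‖y + c • g n‖) atTop < 1 := by
    rw [hmq y _ (hg.const_smul c), funext hnorm, limsup_const]
    exact Real.rpow_lt_one (by positivity) h (by positivity)
  refine eventually_lt_of_limsup_lt hlim (isBoundedUnder_of ⟨‖y‖ + |c|, fun n => ?_⟩)
  exact (norm_add_le _ _).trans_eq (by rw [hnorm])

lemma PropmqStar.mem_szlenkDeriv {q : ℝ} (hmq : PropmqStar X q) (hq : 0 < q)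
    {g : ℕ → StrongDual ℝ X} (hg1 : ∀ n, ‖g n‖ = 1) (hg : WeakStarNull g) {ε : ℝ} (hε : 0 ≤ ε)
    {y : StrongDual ℝ X} (hy : ‖y‖ ^ q + (ε / 2) ^ q < 1) : y ∈ szlenkDeriv X ε := by
  have hεq : 0 ≤ (ε / 2) ^ q := by positivity
  obtain ⟨s, hεs, hs⟩ : ∃ s, ε / 2 < s ∧ s < (1 - ‖y‖ ^ q) ^ q⁻¹ :=
    exists_between ((Real.lt_rpow_inv_iff_of_pos (by positivity) (by linarith) hq).2 (by linarith))
  have hs0 : 0 < s := by linarith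
  have hys : ‖y‖ ^ q + |s| ^ q < 1 := by
    rw [abs_of_pos hs0]
    linarith [(Real.lt_rpow_inv_iff_of_pos hs0.le (by linarith) hq).1 hs]
  refine ⟨?_, fun V hV hyV => ?_⟩
  · by_contra! h
    linarith [Real.one_lt_rpow h hq]
  obtain ⟨n, ⟨h₁, h₂⟩, h₃, h₄⟩ :=
    ((hmq.eventually_norm_add_smul_lt_one hq hg1 hg hys).and
      (hmq.eventually_norm_add_smul_lt_one hq hg1 hg (c := -s) (by rwa [abs_neg]))).and
    (((hg.const_smul s).eventually_add_mem hV hyV).and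
      ((hg.const_smul (-s)).eventually_add_mem hV hyV)) |>.exists
  calc ε < 2 * s := by linarith
    _ = dist (y + s • g n) (y + (-s) • g n) := by
      have : s • g n - (-s) • g n = (2 * s) • g n := by module
      rw [dist_add_left, dist_eq_norm, this, norm_smul, hg1, mul_one,
        Real.norm_of_nonneg (by positivity)]
    _ ≤ diam (closedBall 0 1 ∩ V) :=
      dist_le_diam_of_mem (isBounded_closedBall.subset Set.inter_subset_left)
        ⟨mem_closedBall_zero_iff.2 h₁.le, h₃⟩ ⟨mem_closedBall_zero_iff.2 h₂.le, h₄⟩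

end

theorem szlenkDeriv_eq_ball_of_propmqStar_of_shrinkingFDD_general (X : Type*)
    [NormedAddCommGroup X] [NormedSpace ℝ X]
    (hinf : ¬ FiniteDimensional ℝ X)
    (q : ℝ) (hq : 1 ≤ q) (hmq : PropmqStar X q)
    (P : ℕ → X →L[ℝ] X)
    (hrank : ∀ n, FiniteDimensional ℝ (LinearMap.range (P n : X →ₗ[ℝ] X)))
    (hconv : ∀ x : X, Filter.Tendsto (fun n => P n x) Filter.atTop (nhds x))
    (ε : ℝ) (hε : ε ∈ Set.Ioo (0 : ℝ) 2) :
    szlenkDeriv X ε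
      = Metric.closedBall (0 : StrongDual ℝ X) ((1 - (ε / 2) ^ q) ^ (1 / q)) := by
  obtain ⟨hε0, hε2⟩ := hε
  have hq0 : 0 < q := by linarith
  have hεq : (ε / 2) ^ q < 1 := Real.rpow_lt_one (by positivity) (by linarith) hq0
  have := separableSpace_of_tendsto_of_finiteDimensional P hrank hconv
  obtain ⟨g, hg1, hg⟩ := exists_weakStarNull_norm_eq_one hinf P hrank hconv
  refine subset_antisymm (fun x hx => ?_) ?_
  · rw [mem_closedBall_zero_iff, le_one_sub_rpow_rpow_one_div_iff (norm_nonneg x) hεq.le hq0]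
    exact hmq.rpow_add_rpow_le_one_of_mem_szlenkDeriv hq0 hε0.le hx
  have hr : (1 - (ε / 2) ^ q) ^ (1 / q) ≠ 0 := by
    refine ((lt_one_sub_rpow_rpow_one_div_iff le_rfl hεq.le hq0).2 ?_).ne'
    rwa [Real.zero_rpow hq0.ne', zero_add]
  rw [← closure_ball _ hr]
  refine (isClosed_szlenkDeriv ε).closure_subset_iff.2 fun y hy => ?_
  rw [mem_ball_zero_iff, lt_one_sub_rpow_rpow_one_div_iff (norm_nonneg y) hεq.le hq0] at hy
  exact hmq.mem_szlenkDeriv hq0 hg1 hg hε0.le hy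

theorem szlenkDeriv_eq_ball_of_propmqStar_of_shrinkingFDD (X : Type*)
    [NormedAddCommGroup X] [NormedSpace ℝ X] [CompleteSpace X]
    (hinf : ¬ FiniteDimensional ℝ X)
    (q : ℝ) (hq : 1 ≤ q) (hmq : PropmqStar X q)
    (P : ℕ → X →L[ℝ] X)
    (hrank : ∀ n, FiniteDimensional ℝ (LinearMap.range (P n : X →ₗ[ℝ] X)))
    (hcomp : ∀ m n, (P n).comp (P m) = P (min m n))
    (hne : ∀ n, P n ≠ P (n + 1))
    (hconv : ∀ x : X, Filter.Tendsto (fun n => P n x) Filter.atTop (nhds x))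
    (hshrink : ∀ x : StrongDual ℝ X,
      Filter.Tendsto (fun n => ‖x.comp (P n) - x‖) Filter.atTop (nhds (0 : ℝ)))
    (ε : ℝ) (hε : ε ∈ Set.Ioo (0 : ℝ) 2) :
    szlenkDeriv X ε
      = Metric.closedBall (0 : StrongDual ℝ X) ((1 - (ε / 2) ^ q) ^ (1 / q)) :=
  szlenkDeriv_eq_ball_of_propmqStar_of_shrinkingFDD_general X hinf q hq hmq P hrank hconv ε hε
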